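/- Let K > 0, t ∈ (0,1), and suppose n = D·K²/(t(1−t)) with D > 9. Then every x ∈ E_{t,K}^n satisfies log Mμ(x) ≥ K²/2 + K²(2t−1)/(6√D) − 4K²D/(√D−3)³, where μ is the counting measure on ℤ^n. -/

import Mathlib

open MeasureTheory Metric Filter ProbabilityTheory
open scoped ENNReal NNReal

/-- The cubic centered Hardy--Littlewood maximal function of a measure `μ` on `ℝ^n`
(with the sup norm, so that `Metric.closedBall x r` is the cube `Q(x,r)` of center `x`
and edge length `2r`). -/
noncomputable def maximalFn {n : ℕ} (μ : Measure (Fin n → ℝ)) (x : Fin n → ℝ) : ℝ≥0∞ :=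
  ⨆ (r : ℝ) (_ : 0 < r), μ (closedBall x r) / volume (closedBall x r)


/-- The counting measure on the integer lattice `ℤ^n ⊂ ℝ^n`:
`μ(A) = card (A ∩ ℤ^n)`. -/
noncomputable def latticeMeasure (n : ℕ) : Measure (Fin n → ℝ) :=
  Measure.sum fun k : Fin n → ℤ => Measure.dirac fun i => (k i : ℝ)


/-- A number `y ∈ [0,1]` is `t`-centered if `(1-t)/2 ≤ y ≤ (1+t)/2`. -/
def tCentered (t y : ℝ) : Prop := (1 - t) / 2 ≤ y ∧ y ≤ (1 + t) / 2


/-- `E_{t,K}^n`: the set of `x ∈ [0,1]^n` with at least `n t + K √(n t (1-t))`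
`t`-centered coordinates. -/
def ESet (n : ℕ) (t K : ℝ) : Set (Fin n → ℝ) :=
  {x | x ∈ Set.Icc 0 1 ∧
    (n : ℝ) * t + K * Real.sqrt (n * t * (1 - t)) ≤ ({i : Fin n | tCentered t (x i)}.ncard : ℝ)}

/-!
Let `L = 2N + 1` be the largest odd integer `≤ √D` and take the cube `Q(x, N + (1 + t)/2)`, of side
`L + t`. Each coordinate interval contains at least `L` integers, and `L + 1` of them when the
coordinate is `t`-centered, so `Mμ(x) ≥ (1 + a)^m / (1 + t a)^n` with `a = 1/L` and
`m ≥ nt + K²√D` centered coordinates. Bounding `log (1 + t a)` above by `t log (1 + a)` plus a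
quartic correction, the terms `nt log (1 + a)` cancel; bounding `log (1 + a)` below by its Taylor
polynomial of degree 4 and using `1/√D ≤ a ≤ 1/(√D - 2)` leaves a rational inequality in `√D`.
-/

open Set Finset

theorem monotoneOn_Ici_of_hasDerivAt {f f' : ℝ → ℝ} {b : ℝ}
    (hf : ∀ y, b ≤ y → HasDerivAt f (f' y) y) (hf' : ∀ y, b < y → 0 ≤ f' y) :
    MonotoneOn f (Ici b) := by
  refine monotoneOn_of_hasDerivWithinAt_nonneg (f' := f') (convex_Ici b)
    (fun y hy => (hf y hy).continuousAt.continuousWithinAt) (fun y hy => ?_) (fun y hy => ?_)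
  all_goals rw [interior_Ici] at hy
  exacts [(hf y (le_of_lt hy)).hasDerivWithinAt, hf' y hy]

theorem Real.taylor_four_le_log_one_add {a : ℝ} (ha : 0 ≤ a) :
    a - a ^ 2 / 2 + a ^ 3 / 3 - a ^ 4 / 4 ≤ Real.log (1 + a) := by
  let f y := Real.log (1 + y) - (y - y ^ 2 / 2 + y ^ 3 / 3 - y ^ 4 / 4)
  have hf : ∀ y, 0 ≤ y → HasDerivAt f (y ^ 4 / (1 + y)) y := fun y hy => by
    have hlog := ((hasDerivAt_id y).const_add 1).log (by simp; linarith)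
    have hpoly := (((hasDerivAt_id y).sub ((hasDerivAt_pow 2 y).div_const 2)).add
      ((hasDerivAt_pow 3 y).div_const 3)).sub ((hasDerivAt_pow 4 y).div_const 4)
    refine (hlog.sub hpoly).congr_deriv ?_
    have : 1 + y ≠ 0 := by positivity
    simp only [id, Nat.cast_ofNat]
    field_simp
    ring
  have hmono := monotoneOn_Ici_of_hasDerivAt hf (fun y hy => by positivity) self_mem_Ici ha ha
  rw [show f 0 = 0 by simp [f]] at hmono
  exact sub_nonneg.1 hmono

theorem Real.log_one_add_mul_le {t a : ℝ} (ht0 : 0 ≤ t) (ht1 : t ≤ 1) (ha : 0 ≤ a) :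
    Real.log (1 + t * a) ≤ t * Real.log (1 + a)
      + t * (1 - t) * (a ^ 2 / 2 - (1 + t) * a ^ 3 / 3 + (1 + t + t ^ 2) * a ^ 4 / 4) := by
  let f y := t * Real.log (1 + y) - Real.log (1 + t * y)
    + t * (1 - t) * (y ^ 2 / 2 - (1 + t) * y ^ 3 / 3 + (1 + t + t ^ 2) * y ^ 4 / 4)
  have hf : ∀ y, 0 ≤ y → HasDerivAt f (t * (1 - t) * y ^ 4 *
      ((1 + t) * (1 + t ^ 2) + t * (1 + t + t ^ 2) * y) / ((1 + y) * (1 + t * y))) y :=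
      fun y hy => by
    have hty : 0 < 1 + t * y := by positivity
    have hlog := ((hasDerivAt_id y).const_add 1).log (by simp; linarith)
    have hlogt := (((hasDerivAt_id y).const_mul t).const_add 1).log (by simpa using hty.ne')
    have hpoly := (((hasDerivAt_pow 2 y).div_const 2).sub
      (((hasDerivAt_pow 3 y).const_mul (1 + t)).div_const 3)).add
      (((hasDerivAt_pow 4 y).const_mul (1 + t + t ^ 2)).div_const 4)
    refine (((hlog.const_mul t).sub hlogt).add (hpoly.const_mul (t * (1 - t)))).congr_deriv ?_
    have : 1 + y ≠ 0 := by positivity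
    simp only [id, Nat.cast_ofNat]
    field_simp
    ring
  have hf' : ∀ y, 0 < y → 0 ≤ t * (1 - t) * y ^ 4 *
      ((1 + t) * (1 + t ^ 2) + t * (1 + t + t ^ 2) * y) / ((1 + y) * (1 + t * y)) :=
    fun y hy => by
      have : 0 ≤ 1 - t := by linarith
      positivity
  have hmono := monotoneOn_Ici_of_hasDerivAt hf hf' self_mem_Ici ha ha
  rw [show f 0 = 0 by simp [f]] at hmono
  dsimp only [f] at hmono
  linarith

theorem rational_error_bound {s : ℝ} (hs : 3 < s) :
    (s ^ 2 + s) / (2 * (s - 2) ^ 2) + (3 * s ^ 2 + s) / (4 * (s - 2) ^ 4)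
      ≤ 1 / 2 + 1 / (2 * s) + 1 / (3 * s ^ 2) + 4 * s ^ 2 / (s - 3) ^ 3 := by
  have hu : 0 < s - 3 := by linarith
  have hv : 0 < s - 2 := by linarith
  rw [← sub_nonneg]
  have key : 1 / 2 + 1 / (2 * s) + 1 / (3 * s ^ 2) + 4 * s ^ 2 / (s - 3) ^ 3
      - ((s ^ 2 + s) / (2 * (s - 2) ^ 2) + (3 * s ^ 2 + s) / (4 * (s - 2) ^ 4))
      = (3888 + 20736 * (s - 3) + 46656 * (s - 3) ^ 2 + 56218 * (s - 3) ^ 3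
        + 39715 * (s - 3) ^ 4 + 16671 * (s - 3) ^ 5 + 4009 * (s - 3) ^ 6
        + 499 * (s - 3) ^ 7 + 24 * (s - 3) ^ 8) / (12 * s ^ 2 * (s - 2) ^ 4 * (s - 3) ^ 3) := by
    field_simp
    ring
  rw [key]
  positivity

theorem taylor_combination_lower_bound {s t a : ℝ} (hs : 3 < s) (ht0 : 0 ≤ t) (ht1 : t ≤ 1)
    (ha1 : 1 / s ≤ a) (ha2 : a ≤ 1 / (s - 2)) :
    1 / 2 + (2 * t - 1) / (6 * s) - 4 * s ^ 2 / (s - 3) ^ 3 ≤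
      s * (a - a ^ 2 / 2 + a ^ 3 / 3 - a ^ 4 / 4)
        - s ^ 2 * (a ^ 2 / 2 - (1 + t) * a ^ 3 / 3 + (1 + t + t ^ 2) * a ^ 4 / 4) := by
  have hs0 : 0 < s := by linarith
  have hv : 0 < s - 2 := by linarith
  have ha0 : 0 < a := lt_of_lt_of_le (by positivity) ha1
  have hsa : 1 ≤ s * a := by rwa [div_le_iff₀' hs0] at ha1
  have ht2 : 1 + t + t ^ 2 ≤ 3 := by nlinarith
  calc 1 / 2 + (2 * t - 1) / (6 * s) - 4 * s ^ 2 / (s - 3) ^ 3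
      ≤ 1 - (s ^ 2 + s) / (2 * (s - 2) ^ 2) + ((1 + t) / (3 * s) + 1 / (3 * s ^ 2))
          - (3 * s ^ 2 + s) / (4 * (s - 2) ^ 4) := by
        have h := rational_error_bound hs
        have : (2 * t - 1) / (6 * s) = (1 + t) / (3 * s) - 1 / (2 * s) := by
          field_simp; ring
        linarith
    _ = 1 - (s ^ 2 + s) * (1 / (s - 2)) ^ 2 / 2 + (s ^ 2 * (1 + t) + s) * (1 / s) ^ 3 / 3
          - (s ^ 2 * 3 + s) * (1 / (s - 2)) ^ 4 / 4 := by
        field_simp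
    _ ≤ s * a - (s ^ 2 + s) * a ^ 2 / 2 + (s ^ 2 * (1 + t) + s) * a ^ 3 / 3
          - (s ^ 2 * (1 + t + t ^ 2) + s) * a ^ 4 / 4 := by
        gcongr
    _ = _ := by ring

theorem exp_le_one_add_pow_div_one_add_mul_pow {m n : ℕ} {K t s a : ℝ} (hs : 3 < s)
    (ht0 : 0 ≤ t) (ht1 : t ≤ 1) (ha1 : 1 / s ≤ a) (ha2 : a ≤ 1 / (s - 2))
    (hm : n * t + K ^ 2 * s ≤ m) (hn : n * t * (1 - t) = s ^ 2 * K ^ 2) :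
    Real.exp (K ^ 2 * (1 / 2 + (2 * t - 1) / (6 * s) - 4 * s ^ 2 / (s - 3) ^ 3))
      ≤ (1 + a) ^ m / (1 + t * a) ^ n := by
  have ha : 0 ≤ a := le_trans (one_div_nonneg.2 (by linarith)) ha1
  have hlog : 0 ≤ Real.log (1 + a) := Real.log_nonneg (by linarith)
  rw [← Real.exp_log (by positivity : 0 < (1 + a) ^ m / (1 + t * a) ^ n), Real.exp_le_exp,
    Real.log_div (by positivity) (by positivity), Real.log_pow, Real.log_pow]
  set Q := a ^ 2 / 2 - (1 + t) * a ^ 3 / 3 + (1 + t + t ^ 2) * a ^ 4 / 4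
  calc K ^ 2 * (1 / 2 + (2 * t - 1) / (6 * s) - 4 * s ^ 2 / (s - 3) ^ 3)
      ≤ K ^ 2 * (s * (a - a ^ 2 / 2 + a ^ 3 / 3 - a ^ 4 / 4) - s ^ 2 * Q) :=
        mul_le_mul_of_nonneg_left (taylor_combination_lower_bound hs ht0 ht1 ha1 ha2) (sq_nonneg K)
    _ ≤ K ^ 2 * s * Real.log (1 + a) - s ^ 2 * K ^ 2 * Q := by
        have := mul_le_mul_of_nonneg_left (Real.taylor_four_le_log_one_add ha)
          (by positivity : 0 ≤ K ^ 2 * s)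
        linarith
    _ = (n * t + K ^ 2 * s) * Real.log (1 + a) - n * (t * Real.log (1 + a) + t * (1 - t) * Q) := by
        linear_combination Q * hn
    _ ≤ m * Real.log (1 + a) - n * Real.log (1 + t * a) := by
        gcongr
        exact Real.log_one_add_mul_le ht0 ht1 ha

theorem div_volume_closedBall_le_maximalFn {n : ℕ} (μ : Measure (Fin n → ℝ)) (x : Fin n → ℝ)
    {r : ℝ} (hr : 0 < r) : μ (closedBall x r) / volume (closedBall x r) ≤ maximalFn μ x :=
  le_iSup₂ (f := fun r (_ : 0 < r) => μ (closedBall x r) / volume (closedBall x r)) r hr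

theorem card_le_latticeMeasure {n : ℕ} {A : Set (Fin n → ℝ)} (S : Finset (Fin n → ℤ))
    (hS : ∀ k ∈ S, (fun i => (k i : ℝ)) ∈ A) : (#S : ℝ≥0∞) ≤ latticeMeasure n A :=
  calc (#S : ℝ≥0∞) = ∑ k ∈ S, Measure.dirac (fun i => (k i : ℝ)) A := by
        rw [Finset.sum_congr rfl fun k hk => Measure.dirac_apply_of_mem (hS k hk), sum_const,
          nsmul_one]
    _ ≤ ∑' k : Fin n → ℤ, Measure.dirac (fun i => (k i : ℝ)) A := ENNReal.sum_le_tsum S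
    _ ≤ latticeMeasure n A := Measure.le_sum_apply _ A

theorem prod_card_Icc_ceil_floor_le_latticeMeasure {n : ℕ} (x : Fin n → ℝ) {r : ℝ} (hr : 0 ≤ r) :
    ((∏ i, #(Icc ⌈x i - r⌉ ⌊x i + r⌋) : ℕ) : ℝ≥0∞) ≤ latticeMeasure n (closedBall x r) := by
  classical
  rw [← Fintype.card_piFinset]
  refine card_le_latticeMeasure _ fun k hk => (dist_pi_le_iff hr).2 fun i => ?_
  obtain ⟨hlo, hhi⟩ := mem_Icc.1 (Fintype.mem_piFinset.1 hk i)
  rw [Real.dist_eq, abs_le]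
  exact ⟨by linarith [Int.ceil_le.1 hlo], by linarith [Int.le_floor.1 hhi]⟩

theorem Int.le_card_Icc_ceil_floor {y r : ℝ} {m : ℕ} (h : (m : ℝ) ≤ 2 * r) :
    m ≤ #(Icc ⌈y - r⌉ ⌊y + r⌋) := by
  have hceil := Int.ceil_lt_add_one (y - r)
  have hfloor := Int.sub_one_lt_floor (y + r)
  have : (m : ℤ) - 1 < ⌊y + r⌋ + 1 - ⌈y - r⌉ := by
    have : ((m : ℤ) - 1 : ℝ) < ⌊y + r⌋ + 1 - ⌈y - r⌉ := by push_cast; linarith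
    exact_mod_cast this
  rw [Int.card_Icc]
  omega

theorem Int.card_Icc_le_card_Icc_ceil_floor {y r : ℝ} {a b : ℤ} (ha : y - r ≤ a)
    (hb : b ≤ y + r) : #(Icc a b) ≤ #(Icc ⌈y - r⌉ ⌊y + r⌋) :=
  card_le_card (Icc_subset_Icc (Int.ceil_le.2 ha) (Int.le_floor.2 hb))

theorem Finset.pow_card_mul_pow_card_compl_le_prod {ι M : Type*} [Fintype ι] [DecidableEq ι]
    [CommMonoid M] [PartialOrder M] [IsOrderedMonoid M]
    (s : Finset ι) {f : ι → M} {b c : M} (hc : ∀ i ∈ s, c ≤ f i) (hb : ∀ i ∉ s, b ≤ f i) :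
    c ^ #s * b ^ #sᶜ ≤ ∏ i, f i := by
  rw [← prod_mul_prod_compl s]
  exact mul_le_mul' (pow_card_le_prod _ _ _ hc)
    (pow_card_le_prod _ _ _ fun i hi => hb i (mem_compl.1 hi))

theorem pow_mul_pow_le_latticeMeasure_closedBall {n : ℕ} (x : Fin n → ℝ) (N : ℕ) {t : ℝ}
    (ht : 0 ≤ t) :
    (((2 * N + 2) ^ {i | tCentered t (x i)}.ncard * (2 * N + 1) ^ (n - {i | tCentered t (x i)}.ncard)
      : ℕ) : ℝ≥0∞) ≤ latticeMeasure n (closedBall x (N + (1 + t) / 2)) := by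
  classical
  refine le_trans ?_ (prod_card_Icc_ceil_floor_le_latticeMeasure x (by positivity))
  gcongr
  have hcompl : n - #{i | tCentered t (x i)}.toFinset = #{i | tCentered t (x i)}.toFinsetᶜ := by
    rw [card_compl, Fintype.card_fin]
  rw [Set.ncard_eq_toFinset_card', hcompl]
  refine pow_card_mul_pow_card_compl_le_prod _ (fun i hi => ?_) fun i _ => ?_
  · obtain ⟨hlo, hhi⟩ := Set.mem_toFinset.1 hi
    calc 2 * N + 2 = #(Icc (-N : ℤ) (N + 1)) := by rw [Int.card_Icc]; omega
      _ ≤ _ := Int.card_Icc_le_card_Icc_ceil_floor (by push_cast; linarith) (by push_cast; linarith)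
  · exact Int.le_card_Icc_ceil_floor (by push_cast; linarith)

theorem ofReal_le_maximalFn_latticeMeasure {n : ℕ} (x : Fin n → ℝ) (N : ℕ) {t : ℝ} (ht : 0 ≤ t) :
    ENNReal.ofReal ((1 + 1 / (2 * N + 1)) ^ {i | tCentered t (x i)}.ncard
      / (1 + t / (2 * N + 1)) ^ n) ≤ maximalFn (latticeMeasure n) x := by
  set m := {i | tCentered t (x i)}.ncard
  have hmn : m ≤ n := by simpa using Set.ncard_le_card {i | tCentered t (x i)}
  have hr : 0 < (N + (1 + t) / 2 : ℝ) := by positivity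
  have hratio : (1 + 1 / (2 * N + 1) : ℝ) ^ m / (1 + t / (2 * N + 1)) ^ n
      = (2 * N + 2) ^ m * (2 * N + 1) ^ (n - m) / (2 * (N + (1 + t) / 2)) ^ n := by
    have hL : (2 * N + 1 : ℝ) ≠ 0 := by positivity
    rw [one_add_div hL, one_add_div hL, div_pow, div_pow, pow_sub₀ _ hL hmn]
    field_simp
    ring
  calc ENNReal.ofReal ((1 + 1 / (2 * N + 1)) ^ m / (1 + t / (2 * N + 1)) ^ n)
      = (((2 * N + 2) ^ m * (2 * N + 1) ^ (n - m) : ℕ) : ℝ≥0∞)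
        / volume (closedBall x (N + (1 + t) / 2)) := by
        rw [Real.volume_pi_closedBall x hr.le, Fintype.card_fin, hratio,
          ENNReal.ofReal_div_of_pos (by positivity)]
        norm_cast
    _ ≤ latticeMeasure n (closedBall x (N + (1 + t) / 2))
        / volume (closedBall x (N + (1 + t) / 2)) := by
        gcongr
        exact pow_mul_pow_le_latticeMeasure_closedBall x N ht
    _ ≤ maximalFn (latticeMeasure n) x := div_volume_closedBall_le_maximalFn _ x hr

theorem log_maximal_lower_bound (n : ℕ) (K t D : ℝ) (hK : 0 < K) (ht0 : 0 < t) (ht1 : t < 1)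
    (hD : 9 < D) (hn : (n : ℝ) = D * K ^ 2 / (t * (1 - t))) :
    ∀ x ∈ ESet n t K,
      ENNReal.ofReal (Real.exp (K ^ 2 / 2 + K ^ 2 * (2 * t - 1) / (6 * Real.sqrt D)
        - 4 * K ^ 2 * D / (Real.sqrt D - 3) ^ 3)) ≤ maximalFn (latticeMeasure n) x := by
  rintro x ⟨-, hx⟩
  set s := Real.sqrt D
  have hs2 : s ^ 2 = D := Real.sq_sqrt (by linarith)
  have hs : 3 < s := by nlinarith [Real.sqrt_nonneg D]
  have hnt : n * t * (1 - t) = s ^ 2 * K ^ 2 := by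
    have : 1 - t ≠ 0 := by linarith
    rw [hn, hs2]
    field_simp
  have hm : n * t + K ^ 2 * s ≤ {i | tCentered t (x i)}.ncard := by
    rw [hnt, ← mul_pow, Real.sqrt_sq (by positivity)] at hx
    linarith
  set N := ⌊(s - 1) / 2⌋₊
  have hN_le : (2 * N + 1 : ℝ) ≤ s := by
    have := Nat.floor_le (show 0 ≤ (s - 1) / 2 by linarith)
    linarith
  have hN_gt : s - 2 < 2 * N + 1 := by
    have := Nat.lt_floor_add_one ((s - 1) / 2)
    linarith
  have key := exp_le_one_add_pow_div_one_add_mul_pow hs ht0.le ht1.le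
    (one_div_le_one_div_of_le (by positivity) hN_le)
    (one_div_le_one_div_of_le (by linarith) hN_gt.le) hm hnt
  rw [mul_one_div] at key
  refine le_trans (ENNReal.ofReal_le_ofReal ?_) (ofReal_le_maximalFn_latticeMeasure x N ht0.le)
  convert key using 2
  rw [← hs2]
  ring
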